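/- Let n ≥ 2, let u, u' ∈ ℝⁿ be unit timelike vectors, and let C : (Fin n)⁴ → ℝ be any rank-4 covariant tensor (no symmetries assumed). If θ_u·C = C and θ_{u'}·C = −C, then C = 0. In other words, a nonzero rank-4 tensor cannot be purely electric with respect to one unit timelike direction and purely magnetic with respect to another, possibly different, unit timelike direction. -/

import Mathlib

/-!
For a unit timelike `u` the symmetric matrix `θ_u η = η + 2uuᵀ` is positive definite: writing
`x = ηy`, its quadratic form is `⟨y, y⟩ + 2⟨u, y⟩² = ⟨w, w⟩ + ⟨u, y⟩²` with `w` the projection of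
`y` onto `u⊥`, which is spacelike. Hence so is its fourth Kronecker power `(θ_u η)^{⊗4}`.
Flatten `C` to a vector `c`; pullback by `Λ` is `c ↦ c Λ^{⊗4}`. If `c θ_u^{⊗4} = c` and
`c θ_{u'}^{⊗4} = -c`, then the positive quantities `c (θ_u η)^{⊗4} c` and `c (θ_{u'} η)^{⊗4} c`
equal `c η^{⊗4} c` and `-c η^{⊗4} c` respectively, which forces `c = 0`.
-/

open Matrix

noncomputable section

/-- The Minkowski metric `η = diag(-1, 1, …, 1)` on `ℝⁿ`. -/
def eta (n : ℕ) : Matrix (Fin n) (Fin n) ℝ :=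
  Matrix.diagonal fun i => if i.val = 0 then (-1 : ℝ) else 1

/-- The reflection `θ_u = I + 2u(ηu)ᵀ` sending `u ↦ -u` and fixing `u^⊥`. -/
def theta {n : ℕ} (u : Fin n → ℝ) : Matrix (Fin n) (Fin n) ℝ :=
  1 + (2 : ℝ) • vecMulVec u ((eta n).mulVec u)

/-- The pullback action of a matrix `Λ` on rank-4 covariant tensors. -/
def pull {n : ℕ} (Λ : Matrix (Fin n) (Fin n) ℝ)
    (C : Fin n → Fin n → Fin n → Fin n → ℝ) : Fin n → Fin n → Fin n → Fin n → ℝ :=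
  fun a b c d => ∑ a', ∑ b', ∑ c', ∑ d',
    C a' b' c' d' * Λ a' a * Λ b' b * Λ c' c * Λ d' d

open scoped Kronecker

lemma eta_mul_eta (n : ℕ) : eta n * eta n = 1 := by
  rw [eta, diagonal_mul_diagonal, ← diagonal_one]
  congr 1
  funext i
  split_ifs <;> norm_num

lemma eta_transpose (n : ℕ) : (eta n)ᵀ = eta n := diagonal_transpose _

lemma theta_mul_eta {n : ℕ} (u : Fin n → ℝ) :
    theta u * eta n = eta n + (2 : ℝ) • vecMulVec u u := by
  rw [theta, add_mul, one_mul, smul_mul, vecMulVec_mul, ← vecMul_transpose, eta_transpose,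
    vecMul_vecMul, eta_mul_eta, vecMul_one]

lemma ne_zero_of_eta_dotProduct_eq_neg_one {n : ℕ} {u : Fin n → ℝ}
    (hu : u ⬝ᵥ eta n *ᵥ u = -1) : n ≠ 0 := by
  rintro rfl
  simp [dotProduct] at hu

lemma eta_dotProduct_mulVec_succ {m : ℕ} (a b : Fin (m + 1) → ℝ) :
    a ⬝ᵥ eta (m + 1) *ᵥ b = -(a 0 * b 0) + Fin.tail a ⬝ᵥ Fin.tail b := by
  simp [eta, mulVec_diagonal, dotProduct, Fin.sum_univ_succ, Fin.tail]

lemma eta_dotProduct_mulVec_pos_of_orthogonal {n : ℕ} {u w : Fin n → ℝ}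
    (hu : u ⬝ᵥ eta n *ᵥ u = -1) (huw : u ⬝ᵥ eta n *ᵥ w = 0) (hw : w ≠ 0) :
    0 < w ⬝ᵥ eta n *ᵥ w := by
  obtain ⟨m, rfl⟩ := Nat.exists_eq_succ_of_ne_zero (ne_zero_of_eta_dotProduct_eq_neg_one hu)
  rw [eta_dotProduct_mulVec_succ] at hu huw ⊢
  have hCS : (Fin.tail u ⬝ᵥ Fin.tail w) ^ 2 ≤
      (Fin.tail u ⬝ᵥ Fin.tail u) * (Fin.tail w ⬝ᵥ Fin.tail w) := by
    simpa only [dotProduct, pow_two] using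
      Finset.sum_mul_sq_le_sq_mul_sq Finset.univ (Fin.tail u) (Fin.tail w)
  have hw₀ : 0 < w 0 ^ 2 + Fin.tail w ⬝ᵥ Fin.tail w := by
    contrapose! hw
    have hB : 0 ≤ Fin.tail w ⬝ᵥ Fin.tail w := dotProduct_self_star_nonneg (Fin.tail w)
    have h0 : w 0 = 0 := pow_eq_zero_iff two_ne_zero |>.1 (by nlinarith [sq_nonneg (w 0)])
    have ht : Fin.tail w = 0 := dotProduct_self_eq_zero.1 (by nlinarith [sq_nonneg (w 0)])
    exact funext fun i => Fin.cases h0 (congrFun ht) i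
  have hA : 0 ≤ Fin.tail u ⬝ᵥ Fin.tail u := dotProduct_self_star_nonneg (Fin.tail u)
  have hP : u 0 * w 0 = Fin.tail u ⬝ᵥ Fin.tail w := by linarith
  rw [← hP] at hCS
  -- `(1 + |ū|²)(|w̄|² - w₀²) = |w̄|² + (|ū|²|w̄|² - (u₀w₀)²) ≥ |w̄|²`
  nlinarith

lemma eta_dotProduct_mulVec_comm {n : ℕ} (a b : Fin n → ℝ) :
    a ⬝ᵥ eta n *ᵥ b = b ⬝ᵥ eta n *ᵥ a := by
  rw [dotProduct_mulVec, ← mulVec_transpose, eta_transpose, dotProduct_comm]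

lemma eta_dotProduct_mulVec_add_two_mul_sq_pos {n : ℕ} {u y : Fin n → ℝ}
    (hu : u ⬝ᵥ eta n *ᵥ u = -1) (hy : y ≠ 0) :
    0 < y ⬝ᵥ eta n *ᵥ y + 2 * (u ⬝ᵥ eta n *ᵥ y) ^ 2 := by
  set α := u ⬝ᵥ eta n *ᵥ y
  -- `w` is the `η`-projection of `y` onto `u⊥`, and the form below equals `⟨w, w⟩ + α²`
  set w := y + α • u
  have huw : u ⬝ᵥ eta n *ᵥ w = 0 := by
    simp only [w, mulVec_add, mulVec_smul, dotProduct_add, dotProduct_smul, hu, smul_eq_mul]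
    ring
  have hww : w ⬝ᵥ eta n *ᵥ w = y ⬝ᵥ eta n *ᵥ y + α ^ 2 := by
    simp only [w, mulVec_add, mulVec_smul, dotProduct_add, add_dotProduct, dotProduct_smul,
      smul_dotProduct, hu, smul_eq_mul, eta_dotProduct_mulVec_comm y u]
    ring
  rcases eq_or_ne w 0 with hw | hw
  · have hα : α ≠ 0 := by
      rintro hα
      exact hy (by simpa [w, hα] using hw)
    have : y ⬝ᵥ eta n *ᵥ y + α ^ 2 = 0 := by simpa [hw] using hww.symm
    nlinarith [sq_pos_of_ne_zero hα]
  · nlinarith [eta_dotProduct_mulVec_pos_of_orthogonal hu huw hw, sq_nonneg α]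

lemma posDef_theta_mul_eta {n : ℕ} {u : Fin n → ℝ} (hu : u ⬝ᵥ eta n *ᵥ u = -1) :
    (theta u * eta n).PosDef := by
  rw [theta_mul_eta]
  refine PosDef.of_dotProduct_mulVec_pos ?_ fun x hx => ?_
  · rw [IsHermitian, conjTranspose_eq_transpose_of_trivial, transpose_add, transpose_smul,
      eta_transpose, transpose_vecMulVec]
  · obtain ⟨y, rfl⟩ : ∃ y, eta n *ᵥ y = x :=
      ⟨eta n *ᵥ x, by rw [mulVec_mulVec, eta_mul_eta, one_mulVec]⟩
    have hy : y ≠ 0 := by rintro rfl; simp at hx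
    have hquad : star (eta n *ᵥ y) ⬝ᵥ (eta n + (2 : ℝ) • vecMulVec u u) *ᵥ (eta n *ᵥ y) =
        y ⬝ᵥ eta n *ᵥ y + 2 * (u ⬝ᵥ eta n *ᵥ y) ^ 2 := by
      rw [star_trivial, add_mulVec, smul_mulVec, vecMulVec_mulVec, mulVec_mulVec, eta_mul_eta,
        one_mulVec]
      simp only [op_smul_eq_smul, dotProduct_add, dotProduct_smul, smul_eq_mul]
      rw [dotProduct_comm _ y, dotProduct_comm _ u]
      ring
    exact hquad ▸ eta_dotProduct_mulVec_add_two_mul_sq_pos hu hy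

section Kronecker

variable {ι R : Type*}

def fourfoldKronecker [Mul R] (Λ : Matrix ι ι R) : Matrix (ι × ι × ι × ι) (ι × ι × ι × ι) R :=
  Λ ⊗ₖ (Λ ⊗ₖ (Λ ⊗ₖ Λ))

lemma fourfoldKronecker_mul [Fintype ι] [CommSemiring R] (Λ M : Matrix ι ι R) :
    fourfoldKronecker Λ * fourfoldKronecker M = fourfoldKronecker (Λ * M) := by
  simp only [fourfoldKronecker, mul_kronecker_mul]

open scoped ComplexOrder in
lemma Matrix.PosDef.fourfoldKronecker {𝕜 : Type*} [RCLike 𝕜] [Finite ι] {Λ : Matrix ι ι 𝕜}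
    (hΛ : Λ.PosDef) : (fourfoldKronecker Λ).PosDef :=
  hΛ.kronecker (hΛ.kronecker (hΛ.kronecker hΛ))

end Kronecker

def uncurry4 {ι R : Type*} (C : ι → ι → ι → ι → R) : ι × ι × ι × ι → R :=
  fun x => C x.1 x.2.1 x.2.2.1 x.2.2.2

lemma uncurry4_pull {n : ℕ} (Λ : Matrix (Fin n) (Fin n) ℝ)
    (C : Fin n → Fin n → Fin n → Fin n → ℝ) :
    uncurry4 (pull Λ C) = uncurry4 C ᵥ* fourfoldKronecker Λ := by
  funext x
  simp only [uncurry4, pull, vecMul, dotProduct, fourfoldKronecker, kroneckerMap_apply,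
    Fintype.sum_prod_type]
  ring_nf

lemma eq_zero_of_vecMul_eq_self_of_vecMul_eq_neg {ι : Type*} [Fintype ι] {P Q E : Matrix ι ι ℝ}
    (hP : (P * E).PosDef) (hQ : (Q * E).PosDef) {c : ι → ℝ} (hcP : c ᵥ* P = c)
    (hcQ : c ᵥ* Q = -c) : c = 0 := by
  by_contra hc
  have hPc := hP.dotProduct_mulVec_pos hc
  have hQc := hQ.dotProduct_mulVec_pos hc
  rw [star_trivial, ← mulVec_mulVec, dotProduct_mulVec, hcP] at hPc
  rw [star_trivial, ← mulVec_mulVec, dotProduct_mulVec, hcQ, neg_dotProduct] at hQc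
  linarith

theorem stmt9_general {n : ℕ} (u u' : Fin n → ℝ)
    (hu : u ⬝ᵥ (eta n).mulVec u = -1) (hu' : u' ⬝ᵥ (eta n).mulVec u' = -1)
    (C : Fin n → Fin n → Fin n → Fin n → ℝ)
    (hPE : pull (theta u) C = C)
    (hPM : pull (theta u') C = (fun a b c d => -(C a b c d))) :
    C = fun _ _ _ _ => (0 : ℝ) := by
  have hK : ∀ v : Fin n → ℝ, v ⬝ᵥ eta n *ᵥ v = -1 →
      (fourfoldKronecker (theta v) * fourfoldKronecker (eta n)).PosDef := fun v hv => by
    rw [fourfoldKronecker_mul]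
    exact (posDef_theta_mul_eta hv).fourfoldKronecker
  have hC : uncurry4 C = 0 :=
    eq_zero_of_vecMul_eq_self_of_vecMul_eq_neg (hK u hu) (hK u' hu')
      (by rw [← uncurry4_pull, hPE]) (by rw [← uncurry4_pull, hPM]; rfl)
  funext a b c d
  exact congrFun hC (a, b, c, d)

/-- A nonzero rank-4 covariant tensor cannot be purely electric with respect to one
unit timelike direction and purely magnetic with respect to another. -/
theorem stmt9 {n : ℕ} (hn : 2 ≤ n) (u u' : Fin n → ℝ)
    (hu : u ⬝ᵥ (eta n).mulVec u = -1) (hu' : u' ⬝ᵥ (eta n).mulVec u' = -1)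
    (C : Fin n → Fin n → Fin n → Fin n → ℝ)
    (hPE : pull (theta u) C = C)
    (hPM : pull (theta u') C = (fun a b c d => -(C a b c d))) :
    C = fun _ _ _ _ => (0 : ℝ) :=
  stmt9_general u u' hu hu' C hPE hPM
end
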